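/- arXiv:2202.13022 — 3 statements merged into one kernel-verified Lean document; each statement's English description precedes it below -/
import Mathlib

section
/- For the ODE du/dt = f(u) in ℝⁿ with a quadratic invariant defined by a symmetric matrix Q satisfying vᵀ Q f(v) = 0 for all v, one step of the implicit midpoint method u_{n+1} = u_n + h·f((u_n + u_{n+1})/2) exactly preserves the quadratic form: u_{n+1}ᵀ Q u_{n+1} = u_nᵀ Q u_n. -/
open Matrix

/-- One step of the implicit midpoint method exactly preserves a quadratic invariant. -/
theorem implicit_midpoint_preserves_quadratic {n : ℕ}
    (Q : Matrix (Fin n) (Fin n) ℝ) (hQ : Q.IsSymm)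
    (f : (Fin n → ℝ) → (Fin n → ℝ))
    (hinv : ∀ v : Fin n → ℝ, v ⬝ᵥ Q.mulVec (f v) = 0)
    (h : ℝ) (u0 u1 : Fin n → ℝ)
    (hstep : u1 = u0 + h • f ((1 / 2 : ℝ) • (u0 + u1))) :
    u1 ⬝ᵥ Q.mulVec u1 = u0 ⬝ᵥ Q.mulVec u0 := by
  set v := (1 / 2 : ℝ) • (u0 + u1) with hv
  have hsym : ∀ a b : Fin n → ℝ, a ⬝ᵥ Q.mulVec b = b ⬝ᵥ Q.mulVec a := by
    intro a b
    rw [dotProduct_mulVec, ← hQ.eq, vecMul_transpose, dotProduct_comm, hQ.eq]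
  have h0 : v ⬝ᵥ Q.mulVec (f v) = 0 := hinv v
  have hdiff : u1 - u0 = h • f v := by rw [hstep]; abel
  have hsum : u1 + u0 = (2 : ℝ) • v := by
    rw [hv, smul_smul]; norm_num; abel
  have key : (u1 + u0) ⬝ᵥ Q.mulVec (u1 - u0) = 0 := by
    rw [hsum, hdiff]
    simp [mulVec_smul, smul_dotProduct, dotProduct_smul, h0]
  have expand : (u1 + u0) ⬝ᵥ Q.mulVec (u1 - u0)
      = u1 ⬝ᵥ Q.mulVec u1 - u0 ⬝ᵥ Q.mulVec u0 := by
    rw [mulVec_sub, add_dotProduct, dotProduct_sub, dotProduct_sub, hsym u0 u1]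
    ring
  rw [expand] at key
  linarith
end

section
/- For the ODE du/dt = f(u) with quadratic invariant given by symmetric Q satisfying vᵀ Q f(v) = 0 for all v, the leapfrog (explicit midpoint multistep) scheme u_{n+1} = u_{n−1} + 2δt · f(u_n) exactly conserves the bilinear quantity C_n = u_nᵀ Q u_{n+1}, i.e. u_nᵀ Q u_{n+1} = u_{n−1}ᵀ Q u_n. -/
open Matrix

/-- The leapfrog scheme `u_{n+1} = u_{n-1} + 2δt f(u_n)` conserves the bilinear
quantity `u_nᵀ Q u_{n+1}`. -/
theorem leapfrog_preserves_bilinear {n : ℕ}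
    (Q : Matrix (Fin n) (Fin n) ℝ) (hQ : Q.IsSymm)
    (f : (Fin n → ℝ) → (Fin n → ℝ))
    (hinv : ∀ v : Fin n → ℝ, v ⬝ᵥ Q.mulVec (f v) = 0)
    (dt : ℝ) (um u0 up : Fin n → ℝ)
    (hstep : up = um + (2 * dt) • f u0) :
    u0 ⬝ᵥ Q.mulVec up = um ⬝ᵥ Q.mulVec u0 := by
  subst hstep
  rw [Matrix.mulVec_add, Matrix.mulVec_smul, dotProduct_add, dotProduct_smul,
    hinv, smul_zero, add_zero]
  rw [Matrix.dotProduct_mulVec, ← Matrix.mulVec_transpose, hQ.eq, dotProduct_comm]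
end

section
/- A Runge–Kutta method with coefficients (a_{ij}, b_i) satisfying the symplecticity condition b_i a_{ij} + b_j a_{ji} = b_i b_j for all i, j conserves every quadratic invariant: if Q is symmetric with vᵀ Q f(v) = 0 for all v, then one RK step u₁ = u₀ + h Σᵢ bᵢ f(Uᵢ) with stages Uᵢ = u₀ + h Σⱼ a_{ij} f(Uⱼ) satisfies u₁ᵀ Q u₁ = u₀ᵀ Q u₀. -/
open Matrix

/-- A Runge–Kutta method whose coefficients satisfy the symplecticity condition
`bᵢ aᵢⱼ + bⱼ aⱼᵢ = bᵢ bⱼ` conserves every quadratic invariant. -/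
theorem symplectic_RK_preserves_quadratic {n s : ℕ}
    (a : Fin s → Fin s → ℝ) (b : Fin s → ℝ)
    (hsymp : ∀ i j, b i * a i j + b j * a j i = b i * b j)
    (Q : Matrix (Fin n) (Fin n) ℝ) (hQ : Q.IsSymm)
    (f : (Fin n → ℝ) → (Fin n → ℝ))
    (hinv : ∀ v : Fin n → ℝ, v ⬝ᵥ Q.mulVec (f v) = 0)
    (h : ℝ) (u0 u1 : Fin n → ℝ) (U : Fin s → (Fin n → ℝ))
    (hstages : ∀ i, U i = u0 + h • ∑ j, a i j • f (U j))
    (hupdate : u1 = u0 + h • ∑ i, b i • f (U i)) :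
    u1 ⬝ᵥ Q.mulVec u1 = u0 ⬝ᵥ Q.mulVec u0 := by
  classical
  set F : Fin s → (Fin n → ℝ) := fun i => f (U i) with hF
  set B : (Fin n → ℝ) →ₗ[ℝ] (Fin n → ℝ) →ₗ[ℝ] ℝ := Matrix.toBilin' Q with hBdef
  have hB : ∀ v w : Fin n → ℝ, B v w = v ⬝ᵥ Q.mulVec w := fun v w =>
    Matrix.toBilin'_apply' Q v w
  -- symmetry of the bilinear form
  have hQs : ∀ v w : Fin n → ℝ, B v w = B w v := by
    intro v w
    rw [hB, hB, Matrix.dotProduct_mulVec, ← Matrix.mulVec_transpose, hQ.eq,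
      dotProduct_comm]
  -- linearity helper lemmas
  have Bsum₂ : ∀ (v : Fin n → ℝ) (g : Fin s → (Fin n → ℝ)),
      B v (∑ i, g i) = ∑ i, B v (g i) := fun v g => map_sum (B v) g Finset.univ
  have Bsmul₂ : ∀ (c : ℝ) (v w : Fin n → ℝ), B v (c • w) = c * B v w := by
    intro c v w; rw [_root_.map_smul, smul_eq_mul]
  have Badd₂ : ∀ (v w₁ w₂ : Fin n → ℝ), B v (w₁ + w₂) = B v w₁ + B v w₂ := by
    intro v w₁ w₂; rw [map_add]
  have Bsub₂ : ∀ (v w₁ w₂ : Fin n → ℝ), B v (w₁ - w₂) = B v w₁ - B v w₂ := by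
    intro v w₁ w₂; rw [map_sub]
  set T : Fin s → Fin s → ℝ := fun i j => B (F i) (F j) with hT
  have hTsymm : ∀ i j, T i j = T j i := fun i j => hQs (F i) (F j)
  -- key: pairing of F i with u0
  have key : ∀ i, B (F i) u0 = - (h * ∑ j, a i j * T i j) := by
    intro i
    have h0 : u0 = U i - h • ∑ j, a i j • F j := by
      rw [hstages i]; simp [hF]
    have hU : B (F i) (U i) = 0 := by
      rw [hQs, hB]; exact hinv (U i)
    rw [h0, Bsub₂, hU, zero_sub, Bsmul₂, Bsum₂]
    congr 2
    exact Finset.sum_congr rfl fun j _ => Bsmul₂ _ _ _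
  set S : Fin n → ℝ := ∑ i, b i • F i with hSdef
  have hupdate' : u1 = u0 + h • S := by rw [hupdate]
  have hS : ∀ v : Fin n → ℝ, B v S = ∑ i, b i * B v (F i) := by
    intro v
    rw [hSdef, Bsum₂]
    exact Finset.sum_congr rfl fun i _ => Bsmul₂ _ _ _
  have expand : B u1 u1 = B u0 u0 + 2 * h * ∑ i, b i * B (F i) u0
      + h ^ 2 * ∑ i, ∑ j, b i * (b j * T i j) := by
    have e1 : B u1 u1 = B u0 u0 + h * B u0 S + h * B S u0 + h * (h * B S S) := by
      rw [hupdate']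
      simp only [map_add, LinearMap.add_apply, _root_.map_smul, LinearMap.smul_apply,
        smul_eq_mul]
      ring
    have h1 : B u0 S = ∑ i, b i * B (F i) u0 := by
      rw [hS]
      exact Finset.sum_congr rfl fun i _ => by rw [hQs u0 (F i)]
    have h2 : B S u0 = ∑ i, b i * B (F i) u0 := by rw [hQs]; exact h1
    have h3 : B S S = ∑ i, ∑ j, b i * (b j * T i j) := by
      rw [hS]
      refine Finset.sum_congr rfl fun i _ => ?_
      rw [hQs, hS, Finset.mul_sum]
    rw [e1, h1, h2, h3]
    ring
  have main : B u1 u1 = B u0 u0 := by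
    rw [expand]
    have hsum : ∑ i, b i * B (F i) u0 = - (h * ∑ i, ∑ j, b i * (a i j * T i j)) := by
      rw [Finset.mul_sum, ← Finset.sum_neg_distrib]
      refine Finset.sum_congr rfl fun i _ => ?_
      rw [key i, Finset.mul_sum, Finset.mul_sum]
      rw [mul_neg, neg_eq_iff_eq_neg, neg_neg, Finset.mul_sum]
      exact Finset.sum_congr rfl fun j _ => by ring
    rw [hsum]
    have swap : ∑ i, ∑ j, b i * (a i j * T i j) = ∑ i, ∑ j, b j * (a j i * T i j) := by
      rw [Finset.sum_comm]
      exact Finset.sum_congr rfl fun i _ => Finset.sum_congr rfl fun j _ => by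
        rw [hTsymm i j]
    have final : ∑ i, ∑ j, b i * (b j * T i j)
        = 2 * ∑ i, ∑ j, b i * (a i j * T i j) := by
      have : (2 : ℝ) * ∑ i, ∑ j, b i * (a i j * T i j)
          = ∑ i, ∑ j, b i * (a i j * T i j) + ∑ i, ∑ j, b j * (a j i * T i j) := by
        rw [← swap]; ring
      rw [this, ← Finset.sum_add_distrib]
      refine Finset.sum_congr rfl fun i _ => ?_
      rw [← Finset.sum_add_distrib]
      refine Finset.sum_congr rfl fun j _ => ?_
      calc b i * (b j * T i j) = (b i * b j) * T i j := by ring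
        _ = (b i * a i j + b j * a j i) * T i j := by rw [hsymp i j]
        _ = b i * (a i j * T i j) + b j * (a j i * T i j) := by ring
    rw [final]
    ring
  rw [← hB, ← hB, main]
end
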